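/- Let μ_n(E), ν_n(E), ω_n(E) be real numbers satisfying A_{2n−1}(E) − B_{2n−1}(E) = μ_n(E)·U and A_{2n}(E) − B_{2n}(E) = ν_n(E)·V + ω_n(E)·W for all n ≥ 1. Then μ_1(E) = −2λ, ν_1(E) = 4λE, ω_1(E) = 2λ(E²−λ²), and for every n ≥ 1: μ_{n+1}(E) = (t_{2n}(E)−2)·t_{2n−1}(E)·μ_n(E), ν_{n+1}(E) = (t_{2n+1}(E)−2)·t_{2n}(E)·ν_n(E), and ω_{n+1}(E) = (t_{2n+1}(E)−2)·t_{2n}(E)·ω_n(E). -/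
import Mathlib


noncomputable section

open Filter Topology

namespace TMH

/-- the pair `(A_n(E), B_n(E))`:  `A_0 = [[E−λ,−1],[1,0]]`, `B_0 = [[E+λ,−1],[1,0]]`,
`A_{n+1} = B_n A_n`, `B_{n+1} = A_n B_n`. -/
def AB (lam E : ℝ) : ℕ → Matrix (Fin 2) (Fin 2) ℝ × Matrix (Fin 2) (Fin 2) ℝ
  | 0 => (!![E - lam, -1; 1, 0], !![E + lam, -1; 1, 0])
  | n + 1 => ((AB lam E n).2 * (AB lam E n).1, (AB lam E n).1 * (AB lam E n).2)

def A (lam E : ℝ) (n : ℕ) : Matrix (Fin 2) (Fin 2) ℝ := (AB lam E n).1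
def B (lam E : ℝ) (n : ℕ) : Matrix (Fin 2) (Fin 2) ℝ := (AB lam E n).2

/-- the trace polynomials `t_n(E) = tr(A_n(E))` -/
def t (lam E : ℝ) (n : ℕ) : ℝ := (A lam E n).trace

/-- the set `Σ_I` of type-I energies -/
def SigmaI (lam : ℝ) : Set ℝ := {E | ∃ k : ℕ, 1 ≤ k ∧ t lam E k = 0}

/-- the set `Σ_II` of type-II energies -/
def SigmaII (lam : ℝ) : Set ℝ :=
  {E | ∃ n₀ : ℕ, ∀ n : ℕ, n₀ ≤ n → |t lam E (2 * n)| ≤ 2 ∧ 2 < |t lam E (2 * n + 1)|}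

/-- the set `Σ_III` of type-III energies -/
def SigmaIII (lam : ℝ) : Set ℝ :=
  {E | ∃ n₀ : ℕ, ∀ n : ℕ, n₀ ≤ n → |t lam E (2 * n + 1)| ≤ 2 ∧ 2 < |t lam E (2 * n)|}

end TMH
namespace TMH

def U : Matrix (Fin 2) (Fin 2) ℝ := !![0, 1; 1, 0]
def V : Matrix (Fin 2) (Fin 2) ℝ := !![1, 0; 0, -1]
def W : Matrix (Fin 2) (Fin 2) ℝ := !![0, -1; 1, 0]

end TMH
namespace TMH

lemma key (P Q : Matrix (Fin 2) (Fin 2) ℝ) (h1 : P.det = 1) (h2 : Q.det = 1)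
    (h3 : P.trace = Q.trace) :
    P * Q * (Q * P) - Q * P * (P * Q) = (P.trace * ((Q * P).trace - 2)) • (P - Q) := by
  rw [Matrix.det_fin_two] at h1 h2
  rw [Matrix.trace_fin_two, Matrix.trace_fin_two] at h3
  have hQP : (Q * P).trace
      = Q 0 0 * P 0 0 + Q 0 1 * P 1 0 + (Q 1 0 * P 0 1 + Q 1 1 * P 1 1) := by
    rw [Matrix.trace_fin_two, Matrix.mul_apply, Matrix.mul_apply, Fin.sum_univ_two,
      Fin.sum_univ_two]
  rw [hQP, Matrix.trace_fin_two]
  set a := P 0 0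
  set b := P 0 1
  set c := P 1 0
  set d := P 1 1
  set e := Q 0 0
  set f := Q 0 1
  set g := Q 1 0
  set h := Q 1 1
  ext i j
  fin_cases i <;> fin_cases j <;>
    simp only [Matrix.mul_apply, Fin.sum_univ_two, Matrix.sub_apply, Matrix.smul_apply,
      smul_eq_mul, Fin.mk_zero, Fin.mk_one, Fin.isValue]
  · linear_combination (2*d*e + 2*a*e - d*d - 2*a*d - a*a) * h1 + (d*d - a*a) * h2 + (-b*c*h - a*b*g - a*c*f - a*d*e + b*c*e - a*a*e + a*d*d - b*c*d + a*a*d - a*b*c) * h3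
  · linear_combination (2*d*f + 2*a*f) * h1 + (-2*b*d - 2*a*b) * h2 + (-b*d*h - b*b*g - 2*a*d*f + b*c*f - a*b*e) * h3
  · linear_combination (2*d*g + 2*a*g) * h1 + (-2*c*d - 2*a*c) * h2 + (-c*d*h - 2*a*d*g + b*c*g - c*c*f - a*c*e) * h3
  · linear_combination (-2*d*e - 2*a*e + d*d + 2*a*d + a*a) * h1 + (-d*d + a*a) * h2 + (-d*d*h - a*d*h + b*c*h - b*d*g - c*d*f - b*c*e - a*d*d + b*c*d - a*a*d + 2*d + a*b*c + 2*a) * h3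

lemma detAB (lam E : ℝ) : ∀ n, (A lam E n).det = 1 ∧ (B lam E n).det = 1 := by
  intro n
  induction n with
  | zero =>
      constructor <;> simp [A, B, AB, Matrix.det_fin_two_of]
  | succ k ih =>
      simp only [A, B] at ih ⊢
      constructor
      · show ((AB lam E k).2 * (AB lam E k).1).det = 1
        rw [Matrix.det_mul, ih.1, ih.2, mul_one]
      · show ((AB lam E k).1 * (AB lam E k).2).det = 1
        rw [Matrix.det_mul, ih.1, ih.2, mul_one]

lemma trAB (lam E : ℝ) (n : ℕ) : (A lam E (n+1)).trace = (B lam E (n+1)).trace :=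
  Matrix.trace_mul_comm (B lam E n) (A lam E n)

/-- **Lemma (initial values and recurrences for `μ_n`, `ν_n`, `ω_n`).**
If `μ_n, ν_n, ω_n` satisfy `A_{2n−1} − B_{2n−1} = μ_n U` and
`A_{2n} − B_{2n} = ν_n V + ω_n W` for all `n ≥ 1`, then `μ_1 = −2λ`, `ν_1 = 4λE`,
`ω_1 = 2λ(E²−λ²)`, and for all `n ≥ 1`:
`μ_{n+1} = (t_{2n}−2)·t_{2n−1}·μ_n`, `ν_{n+1} = (t_{2n+1}−2)·t_{2n}·ν_n`,
`ω_{n+1} = (t_{2n+1}−2)·t_{2n}·ω_n`. -/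
theorem mu_nu_omega_recurrence (lam : ℝ) (hlam : lam ≠ 0) (E : ℝ)
    (μ ν ω : ℕ → ℝ)
    (hμ : ∀ n : ℕ, 1 ≤ n → A lam E (2 * n - 1) - B lam E (2 * n - 1) = μ n • U)
    (hνω : ∀ n : ℕ, 1 ≤ n → A lam E (2 * n) - B lam E (2 * n) = ν n • V + ω n • W) :
    μ 1 = -2 * lam ∧ ν 1 = 4 * lam * E ∧ ω 1 = 2 * lam * (E ^ 2 - lam ^ 2) ∧
    ∀ n : ℕ, 1 ≤ n →
      μ (n + 1) = (t lam E (2 * n) - 2) * t lam E (2 * n - 1) * μ n ∧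
      ν (n + 1) = (t lam E (2 * n + 1) - 2) * t lam E (2 * n) * ν n ∧
      ω (n + 1) = (t lam E (2 * n + 1) - 2) * t lam E (2 * n) * ω n := by
  have hμ1 : μ 1 = -2 * lam := by
    have h := hμ 1 le_rfl
    have h' : (A lam E (2 * 1 - 1) - B lam E (2 * 1 - 1)) 0 1 = (μ 1 • U) 0 1 := by rw [h]
    rw [show (2 * 1 - 1 : ℕ) = 1 from rfl] at h'
    simp only [A, B, AB, U, Matrix.sub_apply, Matrix.smul_apply, smul_eq_mul,
      Matrix.mul_apply, Fin.sum_univ_two, Matrix.cons_val_zero, Matrix.cons_val_one,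
      Matrix.head_cons, Matrix.head_fin_const, Matrix.cons_val', Matrix.empty_val',
      Matrix.cons_val_fin_one, Matrix.of_apply] at h'
    linarith
  have hν1 : ν 1 = 4 * lam * E := by
    have h := hνω 1 le_rfl
    have h' : (A lam E (2 * 1) - B lam E (2 * 1)) 0 0 = ((ν 1) • V + (ω 1) • W) 0 0 := by rw [h]
    rw [show (2 * 1 : ℕ) = 2 from rfl] at h'
    simp only [A, B, AB, U, V, W, Matrix.sub_apply, Matrix.add_apply, Matrix.smul_apply,
      smul_eq_mul, Matrix.mul_apply, Fin.sum_univ_two, Matrix.cons_val_zero,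
      Matrix.cons_val_one, Matrix.head_cons, Matrix.head_fin_const, Matrix.cons_val',
      Matrix.empty_val', Matrix.cons_val_fin_one, Matrix.of_apply] at h'
    linarith
  have hω1 : ω 1 = 2 * lam * (E ^ 2 - lam ^ 2) := by
    have h := hνω 1 le_rfl
    have h' : (A lam E (2 * 1) - B lam E (2 * 1)) 1 0 = ((ν 1) • V + (ω 1) • W) 1 0 := by rw [h]
    rw [show (2 * 1 : ℕ) = 2 from rfl] at h'
    simp only [A, B, AB, U, V, W, Matrix.sub_apply, Matrix.add_apply, Matrix.smul_apply,
      smul_eq_mul, Matrix.mul_apply, Fin.sum_univ_two, Matrix.cons_val_zero,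
      Matrix.cons_val_one, Matrix.head_cons, Matrix.head_fin_const, Matrix.cons_val',
      Matrix.empty_val', Matrix.cons_val_fin_one, Matrix.of_apply, Matrix.vecHead,
      Matrix.vecTail] at h'
    linear_combination -h'
  refine ⟨hμ1, hν1, hω1, ?_⟩
  rintro n hn
  obtain ⟨m, rfl⟩ : ∃ m, n = m + 1 := ⟨n - 1, by omega⟩
  constructor
  · -- μ recurrence, level 2m+1
    have hk := key (A lam E (2*m+1)) (B lam E (2*m+1))
      (detAB lam E (2*m+1)).1 (detAB lam E (2*m+1)).2 (trAB lam E (2*m))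
    have hstep : A lam E (2*m+1+1+1) - B lam E (2*m+1+1+1)
        = (t lam E (2*m+1) * (t lam E (2*m+1+1) - 2)) • (A lam E (2*m+1) - B lam E (2*m+1)) :=
      hk
    have h1 := hμ (m+1) (by omega)
    have h2 := hμ (m+2) (by omega)
    rw [show 2*(m+1)-1 = 2*m+1 by omega] at h1
    rw [show 2*(m+2)-1 = 2*m+1+1+1 by omega] at h2
    rw [h1, h2] at hstep
    have h' : (μ (m+2) • U) 0 1
        = ((t lam E (2*m+1) * (t lam E (2*m+1+1) - 2)) • μ (m+1) • U) 0 1 := by rw [hstep]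
    simp only [U, Matrix.smul_apply, smul_eq_mul, Matrix.cons_val_one, Matrix.cons_val_zero,
      Matrix.head_cons, Matrix.of_apply, Matrix.cons_val', Matrix.empty_val',
      Matrix.cons_val_fin_one, mul_one] at h'
    rw [show 2*(m+1)-1 = 2*m+1 by omega, show 2*(m+1) = 2*m+1+1 by omega,
      show m+1+1 = m+2 from rfl]
    rw [h']; ring
  constructor
  · -- ν recurrence, level 2m+2
    have hk := key (A lam E (2*m+1+1)) (B lam E (2*m+1+1))
      (detAB lam E (2*m+1+1)).1 (detAB lam E (2*m+1+1)).2 (trAB lam E (2*m+1))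
    have hstep : A lam E (2*m+1+1+1+1) - B lam E (2*m+1+1+1+1)
        = (t lam E (2*m+1+1) * (t lam E (2*m+1+1+1) - 2)) • (A lam E (2*m+1+1) - B lam E (2*m+1+1)) :=
      hk
    have h1 := hνω (m+1) (by omega)
    have h2 := hνω (m+2) (by omega)
    rw [show 2*(m+1) = 2*m+1+1 by omega] at h1
    rw [show 2*(m+2) = 2*m+1+1+1+1 by omega] at h2
    rw [h1, h2] at hstep
    have h' : (ν (m+2) • V + ω (m+2) • W) 0 0
        = ((t lam E (2*m+1+1) * (t lam E (2*m+1+1+1) - 2)) • (ν (m+1) • V + ω (m+1) • W)) 0 0 := by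
      rw [hstep]
    simp only [V, W, Matrix.smul_apply, Matrix.add_apply, smul_eq_mul, Matrix.cons_val_one,
      Matrix.cons_val_zero, Matrix.head_cons, Matrix.of_apply, Matrix.cons_val',
      Matrix.empty_val', Matrix.cons_val_fin_one, mul_one, mul_zero, add_zero, mul_neg] at h'
    rw [show 2*(m+1)+1 = 2*m+1+1+1 by omega, show 2*(m+1) = 2*m+1+1 by omega,
      show m+1+1 = m+2 from rfl]
    rw [h']; ring
  · -- ω recurrence, level 2m+2
    have hk := key (A lam E (2*m+1+1)) (B lam E (2*m+1+1))
      (detAB lam E (2*m+1+1)).1 (detAB lam E (2*m+1+1)).2 (trAB lam E (2*m+1))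
    have hstep : A lam E (2*m+1+1+1+1) - B lam E (2*m+1+1+1+1)
        = (t lam E (2*m+1+1) * (t lam E (2*m+1+1+1) - 2)) • (A lam E (2*m+1+1) - B lam E (2*m+1+1)) :=
      hk
    have h1 := hνω (m+1) (by omega)
    have h2 := hνω (m+2) (by omega)
    rw [show 2*(m+1) = 2*m+1+1 by omega] at h1
    rw [show 2*(m+2) = 2*m+1+1+1+1 by omega] at h2
    rw [h1, h2] at hstep
    have h' : (ν (m+2) • V + ω (m+2) • W) 1 0
        = ((t lam E (2*m+1+1) * (t lam E (2*m+1+1+1) - 2)) • (ν (m+1) • V + ω (m+1) • W)) 1 0 := by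
      rw [hstep]
    simp only [V, W, Matrix.smul_apply, Matrix.add_apply, smul_eq_mul, Matrix.cons_val_one,
      Matrix.cons_val_zero, Matrix.head_cons, Matrix.of_apply, Matrix.cons_val',
      Matrix.empty_val', Matrix.cons_val_fin_one, Matrix.vecHead, Matrix.vecTail,
      mul_one, mul_zero, zero_add, mul_neg] at h'
    rw [show 2*(m+1)+1 = 2*m+1+1+1 by omega, show 2*(m+1) = 2*m+1+1 by omega,
      show m+1+1 = m+2 from rfl]
    rw [h']; ring


end TMH
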